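/- The function $\xi_{(0)}(z) = 2\sqrt{3}\,\arctan\!\Big(\frac{\sqrt{3}}{3+2z}\Big) + \log\!\Big(\frac{z^2}{z^2+3z+3}\Big)$ satisfies $\xi_{(0)}(z) < 0$ for all $z > 0$, and $\lim_{z \to \infty} \xi_{(0)}(z) = 0$. -/

import Mathlib

open Set Real Filter

/-- The non-constant zero mode of the Sturm-Liouville problem for D3-branes on a resolved
conifold over `S⁵/ℤ₃`. -/
noncomputable def xiZero (z : ℝ) : ℝ :=
  2 * Real.sqrt 3 * Real.arctan (Real.sqrt 3 / (3 + 2*z)) +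
    Real.log (z^2 / (z^2 + 3*z + 3))

lemma quad_pos (z : ℝ) : 0 < z^2 + 3*z + 3 := by nlinarith [sq_nonneg (z + 3/2)]

noncomputable def gAux (z : ℝ) : ℝ :=
  2 * Real.sqrt 3 * Real.arctan (Real.sqrt 3 / (3 + 2*z)) +
    (Real.log (z^2) - Real.log (z^2 + 3*z + 3))

lemma eqOn_gAux : EqOn xiZero gAux (Ioi 0) := by
  intro z hz
  have h1 : (z:ℝ)^2 ≠ 0 := pow_ne_zero _ (ne_of_gt hz)
  have h2 : z^2 + 3*z + 3 ≠ 0 := (quad_pos z).ne'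
  unfold xiZero gAux
  rw [Real.log_div h1 h2]

lemma gAux_hasDerivAt (z : ℝ) (hz : 0 < z) :
    HasDerivAt gAux (6/(z*(z^2+3*z+3))) z := by
  have hne : (3 + 2*z) ≠ 0 := by positivity
  have h1 : HasDerivAt (fun z : ℝ => 3 + 2*z) 2 z := by
    simpa using ((hasDerivAt_id z).const_mul 2).const_add 3
  have h2 : HasDerivAt (fun z : ℝ => Real.sqrt 3 / (3 + 2*z))
      ((0*(3+2*z) - Real.sqrt 3 * 2)/(3+2*z)^2) z :=
    (hasDerivAt_const z (Real.sqrt 3)).div h1 hne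
  have h3 := (h2.arctan).const_mul (2 * Real.sqrt 3)
  have h4 : HasDerivAt (fun z : ℝ => z^2) (2*z) z := by
    simpa using hasDerivAt_pow 2 z
  have h5 := h4.log (pow_ne_zero 2 hz.ne')
  have h6 : HasDerivAt (fun z : ℝ => z^2 + 3*z + 3) (2*z + 3) z := by
    have := ((hasDerivAt_pow 2 z).add ((hasDerivAt_id z).const_mul 3)).add_const 3
    simpa using this
  have h7 := h6.log (quad_pos z).ne'
  have hfinal := h3.add (h5.sub h7)
  refine hfinal.congr_deriv ?_
  have hs : Real.sqrt 3 * Real.sqrt 3 = 3 := Real.mul_self_sqrt (by norm_num)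
  have hq : z^2+3*z+3 ≠ 0 := (quad_pos z).ne'
  have hz0 : z ≠ 0 := hz.ne'
  have hd : 1 + (Real.sqrt 3 / (3 + 2*z))^2 ≠ 0 := by positivity
  have hs2 : Real.sqrt 3 ^ 2 = 3 := Real.sq_sqrt (by norm_num)
  field_simp
  ring_nf
  rw [hs2]
  ring

lemma strictMono_xi : StrictMonoOn xiZero (Ioi 0) := by
  have hg : StrictMonoOn gAux (Ioi 0) := by
    apply strictMonoOn_of_deriv_pos (convex_Ioi 0)
    · exact fun x hx => ((gAux_hasDerivAt x hx).continuousAt).continuousWithinAt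
    · intro x hx
      rw [interior_Ioi] at hx
      rw [(gAux_hasDerivAt x hx).deriv]
      have := quad_pos x
      have hx0 : (0:ℝ) < x := hx
      positivity
  intro a ha b hb hab
  rw [eqOn_gAux ha, eqOn_gAux hb]
  exact hg ha hb hab

lemma xi_tendsto : Tendsto xiZero atTop (nhds 0) := by
  have hden : Tendsto (fun z : ℝ => 3 + 2*z) atTop atTop := by
    apply tendsto_atTop_add_const_left
    exact Tendsto.const_mul_atTop (by norm_num) tendsto_id
  have hA : Tendsto (fun z : ℝ => Real.arctan (Real.sqrt 3 / (3 + 2*z))) atTop (nhds 0) := by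
    have h0 : Tendsto (fun z : ℝ => Real.sqrt 3 / (3 + 2*z)) atTop (nhds 0) :=
      Tendsto.div_atTop tendsto_const_nhds hden
    have h := (Real.continuous_arctan.tendsto 0).comp h0
    simpa [Real.arctan_zero, Function.comp_def] using h
  have hA' : Tendsto (fun z : ℝ => 2*Real.sqrt 3 * Real.arctan (Real.sqrt 3 / (3 + 2*z)))
      atTop (nhds 0) := by
    simpa using hA.const_mul (2*Real.sqrt 3)
  have hB : Tendsto (fun z : ℝ => z^2/(z^2+3*z+3)) atTop (nhds 1) := by
    have t1 : Tendsto (fun z : ℝ => 3/z) atTop (nhds 0) :=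
      Tendsto.div_atTop tendsto_const_nhds tendsto_id
    have t2 : Tendsto (fun z : ℝ => 3/z^2) atTop (nhds 0) :=
      Tendsto.div_atTop tendsto_const_nhds (tendsto_pow_atTop two_ne_zero)
    have h1 : Tendsto (fun z : ℝ => 1 + 3/z + 3/z^2) atTop (nhds 1) := by
      have := (tendsto_const_nhds (α := ℝ) (f := atTop) (x := (1:ℝ))).add (t1.add t2)
      simpa [add_assoc] using this
    have h2 : Tendsto (fun z : ℝ => (1 + 3/z + 3/z^2)⁻¹) atTop (nhds 1) := by
      simpa using h1.inv₀ one_ne_zero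
    apply h2.congr'
    filter_upwards [eventually_gt_atTop (0:ℝ)] with z hz
    have hq : z^2+3*z+3 ≠ 0 := (quad_pos z).ne'
    field_simp
  have hC : Tendsto (fun z : ℝ => Real.log (z^2/(z^2+3*z+3))) atTop (nhds 0) := by
    have := ((Real.continuousAt_log one_ne_zero).tendsto).comp hB
    simpa [Real.log_one, Function.comp_def] using this
  have := hA'.add hC
  rw [add_zero] at this
  exact this

/-- `ξ₀(z) < 0` for all `z > 0`, and `ξ₀(z) → 0` as `z → ∞`. -/
theorem xiZero_negative_and_vanishing_at_infinity :
    (∀ z > (0:ℝ), xiZero z < 0) ∧ Tendsto xiZero atTop (nhds 0) := by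
  refine ⟨fun z hz => ?_, xi_tendsto⟩
  have h1 : xiZero z < xiZero (z+1) :=
    strictMono_xi (mem_Ioi.2 hz) (mem_Ioi.2 (by linarith)) (by linarith)
  have h2 : xiZero (z+1) ≤ 0 := by
    apply ge_of_tendsto xi_tendsto
    filter_upwards [eventually_ge_atTop (z+1)] with w hw
    rcases eq_or_lt_of_le hw with h | h
    · rw [← h]
    · exact (strictMono_xi (mem_Ioi.2 (by linarith)) (mem_Ioi.2 (by linarith)) h).le
  linarith
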